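/- arXiv:math/0607423 — 2 statements merged into one kernel-verified Lean document; each statement's English description precedes it below -/
import Mathlib

section
/- Let C be a monoidal category and let T : List C → C be the iterated tensor product, T [] = 𝟙_C and T (a :: L) = a ⊗ T L. Then the strictification st C — the category whose objects are lists of objects of C and whose hom-sets are st C (L, L') = C (T L, T L'), with composition and identities inherited from C — admits a monoidal structure in which the tensor product of objects is list concatenation, the tensor product of morphisms f : L₁ ⟶ L₁' and g : L₂ ⟶ L₂' is the conjugate of f ⊗ g by the canonical coherence isomorphisms T (L₁ ++ L₂) ≅ T L₁ ⊗ T L₂, and this monoidal structure is strict: its associator and its left and right unitors are given by identities (eqToIso of the equalities (L₁ ++ L₂) ++ L₃ = L₁ ++ (L₂ ++ L₃), [] ++ L = L, L ++ [] = L). -/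
/-! The functor `evalF : st C ⥤ C` is faithful and, by construction of the tensor product on
`st C`, carries it to the tensor product of `C` conjugated by `Tapp`. Every monoidal axiom of
`st C` is therefore an equation in `C` that follows from the corresponding axiom of `C`
(`Monoidal.induced`), provided `evalF` sends the identity associator and unitors of `st C` to the
coherence composites built from `Tapp`. That reduces the theorem to two coherence identities
for `Tapp`, the associativity hexagon and the right unit law, both by induction on the first
list. -/

open CategoryTheory Category MonoidalCategory

set_option autoImplicit false

universe v v₁ v₂ v₃ u u₁ u₂ u₃

namespace Strictification

variable {C : Type u} [Category.{v} C] [MonoidalCategory C]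

/-- The iterated tensor product `T [] = 𝟙_ C`, `T (a :: L) = a ⊗ T L`. -/
def T : List C → C
  | [] => 𝟙_ C
  | a :: L => a ⊗ T L

@[simp] lemma T_nil : T ([] : List C) = 𝟙_ C := rfl
@[simp] lemma T_cons (a : C) (L : List C) : T (a :: L) = a ⊗ T L := rfl

/-- The strictification `st C` of `C`: objects are lists of objects of `C`,
and morphisms `L ⟶ L'` are the morphisms `T L ⟶ T L'` in `C`, with composition
and identities inherited from `C`. -/
instance stCategory : Category.{v} (List C) where
  Hom L L' := T L ⟶ T L'
  id L := 𝟙 (T L)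
  comp f g := f ≫ g
  id_comp f := Category.id_comp f
  comp_id f := Category.comp_id f
  assoc f g h := Category.assoc f g h

/-- The canonical coherence isomorphism `T (L ++ M) ≅ T L ⊗ T M`, built from
the associators and unitors of `C`. -/
noncomputable def Tapp : (L M : List C) → T (L ++ M) ≅ T L ⊗ T M
  | [], M => (λ_ (T M)).symm
  | a :: L, M => whiskerLeftIso a (Tapp L M) ≪≫ (α_ a (T L) (T M)).symm

/-- Regard a morphism `T L ⟶ T M` of `C` as a morphism `L ⟶ M` of `st C`. -/
def stHom {L M : List C} (f : T L ⟶ T M) : L ⟶ M := f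

/-- Regard a morphism `L ⟶ M` of `st C` as a morphism `T L ⟶ T M` of `C`. -/
def unSt {L M : List C} (f : L ⟶ M) : T L ⟶ T M := f

/-- The evaluation functor `st C ⥤ C`, `L ↦ T L`, identity on morphisms. -/
def evalF (C : Type u) [Category.{v} C] [MonoidalCategory C] : List C ⥤ C where
  obj L := T L
  map f := f
  map_id _ := rfl
  map_comp _ _ := rfl

lemma Tapp_cons_hom (a : C) (L M : List C) :
    (Tapp (a :: L) M).hom = a ◁ (Tapp L M).hom ≫ (α_ a (T L) (T M)).inv := rfl

lemma Tapp_assoc : ∀ L M N : List C,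
    (Tapp (L ++ M) N).hom ≫ (Tapp L M).hom ▷ T N ≫ (α_ (T L) (T M) (T N)).hom =
      eqToHom (congrArg T (L.append_assoc M N)) ≫ (Tapp L (M ++ N)).hom ≫
        T L ◁ (Tapp M N).hom
  | [], M, N => by
    simp [Tapp]
  | a :: L, M, N => by
    simp only [List.cons_append, Tapp_cons_hom]
    calc _ = a ◁ ((Tapp (L ++ M) N).hom ≫ (Tapp L M).hom ▷ T N ≫
            (α_ (T L) (T M) (T N)).hom) ≫ (α_ a (T L) (T M ⊗ T N)).inv := by monoidal
      _ = _ := by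
        rw [Tapp_assoc L M N]
        simp [whiskerLeft_eqToHom]

lemma Tapp_append_nil : ∀ L : List C,
    (Tapp L []).hom = eqToHom (congrArg T L.append_nil) ≫ (ρ_ (T L)).inv
  | [] => (unitors_inv_equal).trans (id_comp _).symm
  | a :: L => by
    rw [Tapp_cons_hom, Tapp_append_nil L]
    simp [whiskerLeft_eqToHom]

instance evalF_faithful : (evalF C).Faithful where
  map_injective h := h

noncomputable instance stMonoidalStruct : MonoidalCategoryStruct (List C) where
  tensorObj L M := L ++ M
  whiskerLeft L M M' g := stHom ((Tapp L M).hom ≫ T L ◁ unSt g ≫ (Tapp L M').inv)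
  whiskerRight f N := stHom ((Tapp _ N).hom ≫ unSt f ▷ T N ≫ (Tapp _ N).inv)
  tensorHom f g := stHom ((Tapp _ _).hom ≫ (unSt f ⊗ₘ unSt g) ≫ (Tapp _ _).inv)
  tensorUnit := []
  associator L M N := eqToIso (L.append_assoc M N)
  leftUnitor L := eqToIso L.nil_append
  rightUnitor L := eqToIso L.append_nil

noncomputable instance stMonoidal : MonoidalCategory (List C) :=
  Monoidal.induced (evalF C)
    { μIso L M := (Tapp L M).symm
      whiskerLeft_eq _ {_ _} _ := rfl
      whiskerRight_eq _ _ := rfl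
      tensorHom_eq _ _ := rfl
      εIso := Iso.refl _
      -- `evalF` is the identity on morphisms, so these are identities between morphisms of `C`.
      associator_eq L M N := by
        change eqToHom (congrArg T (L.append_assoc M N)) =
          ((Tapp (L ++ M) N).hom ≫ ((Tapp L M).hom ⊗ₘ 𝟙 (T N))) ≫ (α_ _ _ _).hom ≫
            (𝟙 (T L) ⊗ₘ (Tapp M N).inv) ≫ (Tapp L (M ++ N)).inv
        simp [reassoc_of% Tapp_assoc L M N]
      leftUnitor_eq L := by
        change 𝟙 (T L) = ((Tapp [] L).hom ≫ (𝟙 (𝟙_ C) ⊗ₘ 𝟙 (T L))) ≫ (λ_ (T L)).hom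
        simp [Tapp]
      rightUnitor_eq L := by
        change eqToHom (congrArg T L.append_nil) =
          ((Tapp L []).hom ≫ (𝟙 (T L) ⊗ₘ 𝟙 (𝟙_ C))) ≫ (ρ_ (T L)).hom
        simp [Tapp_append_nil] }

theorem weak_monoidal_strictification_is_strict_monoidal
    (C : Type u) [Category.{v} C] [MonoidalCategory C] :
    ∃ M : MonoidalCategory (List C),
      ∃ hu : M.tensorUnit = ([] : List C),
      ∃ h : ∀ L L' : List C, M.tensorObj L L' = L ++ L',
        (∀ (L₁ L₁' L₂ L₂' : List C) (f : T L₁ ⟶ T L₁') (g : T L₂ ⟶ T L₂'),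
          M.tensorHom (stHom f) (stHom g) =
            eqToHom (h L₁ L₂) ≫
              stHom ((Tapp L₁ L₂).hom ≫ (f ⊗ₘ g) ≫ (Tapp L₁' L₂').inv) ≫
              eqToHom (h L₁' L₂').symm) ∧
        (∀ L₁ L₂ L₃ : List C,
          M.associator L₁ L₂ L₃ =
            eqToIso (by simp only [h]; exact List.append_assoc L₁ L₂ L₃)) ∧
        (∀ L : List C,
          M.leftUnitor L = eqToIso (by simp only [h, hu, List.nil_append])) ∧
        (∀ L : List C,
          M.rightUnitor L = eqToIso (by simp only [h, hu, List.append_nil])) := by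
  refine ⟨stMonoidal, rfl, fun _ _ => rfl, fun _ _ _ _ _ _ => ?_, fun _ _ _ => rfl,
    fun _ => rfl, fun _ => rfl⟩
  exact ((id_comp _).trans (comp_id _)).symm

end Strictification
end

section
/- Every monoidal category C is monoidally equivalent to a strict monoidal category: there exist a monoidal category D whose associator and left and right unitors are identities (given by eqToIso of equalities of objects), a strong monoidal functor F : D ⥤ C, a strong monoidal functor G : C ⥤ D, and monoidal natural isomorphisms G ⋙ F ≅ 𝟭 C and F ⋙ G ≅ 𝟭 D. -/
open CategoryTheory Category MonoidalCategory

set_option autoImplicit false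

universe v u

namespace Strictification

/-- A monoidal category is strict when its associator and its left and right
unitors are given by identities (`eqToIso` of equalities of objects). -/
def IsStrictMonoidal (D : Type u) [Category.{v} D] [MonoidalCategory D] : Prop :=
  (∃ h : ∀ X Y Z : D, (X ⊗ Y) ⊗ Z = X ⊗ (Y ⊗ Z), ∀ X Y Z : D, α_ X Y Z = eqToIso (h X Y Z)) ∧
  (∃ h : ∀ X : D, 𝟙_ D ⊗ X = X, ∀ X : D, λ_ X = eqToIso (h X)) ∧
  (∃ h : ∀ X : D, X ⊗ 𝟙_ D = X, ∀ X : D, ρ_ X = eqToIso (h X))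

/-- The data of a monoidal equivalence between monoidal categories `D` and `C`:
strong monoidal functors `F : D ⥤ C`, `G : C ⥤ D` together with monoidal
natural isomorphisms `G ⋙ F ≅ 𝟭 C` and `F ⋙ G ≅ 𝟭 D`. -/
structure MonoidalEquivalenceData (D : Type u) (C : Type u)
    [Category.{v} D] [MonoidalCategory D] [Category.{v} C] [MonoidalCategory C] where
  F : D ⥤ C
  G : C ⥤ D
  [mF : F.Monoidal]
  [mG : G.Monoidal]
  counitIso : G ⋙ F ≅ 𝟭 C
  unitIso : F ⋙ G ≅ 𝟭 D
  counit_monoidal : NatTrans.IsMonoidal counitIso.hom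
  unit_monoidal : NatTrans.IsMonoidal unitIso.hom

/-! Objects of the strictification are lists of objects of `C`, and a morphism `L ⟶ M` is a
morphism `tensorList L ⟶ tensorList M` between the right-bracketed tensor products. The tensor
product of objects is concatenation, so associativity and unitality hold on the nose; on morphisms
the structure is transported from `C` along the canonical isomorphisms
`tensorList (L ++ M) ≅ tensorList L ⊗ tensorList M`, whose compatibility with the associator
and unitors is the only coherence needed. Evaluation `tensorList` is then a fully faithful
strong monoidal functor, essentially surjective via `X ⊗ 𝟙_ C ≅ X`, and a strong monoidal
equivalence of categories has a monoidal quasi-inverse. -/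

variable {C : Type u} [Category.{v} C] [MonoidalCategory C]

-- Reducible, so that `tensorList []` and `𝟙_ C` are identified by `simp`.
abbrev tensorList : List C → C
  | [] => 𝟙_ C
  | X :: L => X ⊗ tensorList L

def tensorListAppendIso : (L M : List C) → tensorList (L ++ M) ≅ tensorList L ⊗ tensorList M
  | [], M => (λ_ (tensorList M)).symm
  | X :: L, M =>
    whiskerLeftIso X (tensorListAppendIso L M) ≪≫ (α_ X (tensorList L) (tensorList M)).symm

lemma tensorListAppendIso_nil_hom_comp_rightUnitor (L : List C) :
    (tensorListAppendIso L []).hom ≫ (ρ_ (tensorList L)).hom =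
      eqToHom (congrArg tensorList (List.append_nil L)) := by
  induction L with
  | nil => simp [tensorListAppendIso, tensorList, unitors_inv_equal]
  | cons X L ih =>
    calc _ = X ◁ ((tensorListAppendIso L []).hom ≫ (ρ_ (tensorList L)).hom) := by
          simp [tensorListAppendIso, tensorList]
      _ = _ := by rw [ih, whiskerLeft_eqToHom]

lemma tensorListAppendIso_append_hom (L M N : List C) :
    (tensorListAppendIso (L ++ M) N).hom ≫ (tensorListAppendIso L M).hom ▷ tensorList N ≫
        (α_ _ _ _).hom =
      eqToHom (congrArg tensorList (List.append_assoc L M N)) ≫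
        (tensorListAppendIso L (M ++ N)).hom ≫
          tensorList L ◁ (tensorListAppendIso M N).hom := by
  induction L with
  | nil => simp [tensorListAppendIso, tensorList]
  | cons X L ih =>
    have h := congrArg (X ◁ ·) ih
    simp only [whiskerLeft_comp, whiskerLeft_eqToHom] at h
    simp only [tensorListAppendIso, List.cons_append, Iso.trans_hom, Iso.symm_hom,
      whiskerLeftIso_hom, assoc, ← associator_inv_naturality_right]
    rw [← reassoc_of% h]
    monoidal

variable (C) in
abbrev Strictified : Type u := InducedCategory C (tensorList (C := C))

namespace Strictified

open InducedCategory

variable (C) in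
abbrev eval : Strictified C ⥤ C := inducedFunctor tensorList

instance : MonoidalCategoryStruct (Strictified C) where
  tensorObj L M := List.append L M
  tensorUnit := ([] : List C)
  whiskerLeft L M₁ M₂ f := homMk <|
    (tensorListAppendIso L M₁).hom ≫ tensorList L ◁ f.hom ≫ (tensorListAppendIso L M₂).inv
  whiskerRight {L₁ L₂} f M := homMk <|
    (tensorListAppendIso L₁ M).hom ≫ f.hom ▷ tensorList M ≫ (tensorListAppendIso L₂ M).inv
  tensorHom {L₁ M₁ L₂ M₂} f g := homMk <|
    (tensorListAppendIso L₁ L₂).hom ≫ (f.hom ⊗ₘ g.hom) ≫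
      (tensorListAppendIso M₁ M₂).inv
  associator L M N := eqToIso (List.append_assoc L M N)
  leftUnitor _ := eqToIso rfl
  rightUnitor L := eqToIso (List.append_nil L)

lemma tensorObj_eq (L M : Strictified C) : L ⊗ M = List.append L M := rfl

lemma tensorUnit_eq : 𝟙_ (Strictified C) = ([] : List C) := rfl

open Monoidal in
def inducingFunctorData : InducingFunctorData (eval C) where
  μIso L M := (tensorListAppendIso L M).symm
  εIso := Iso.refl (𝟙_ C)
  whiskerLeft_eq _ _ _ _ := rfl
  whiskerRight_eq _ _ := rfl
  tensorHom_eq _ _ := rfl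
  associator_eq L M N := by
    change (eval C).map (eqToHom (List.append_assoc L M N)) = _
    simp [tensorObj_eq, reassoc_of% tensorListAppendIso_append_hom]
  leftUnitor_eq L := by
    simp [tensorUnit_eq, tensorListAppendIso]
    rfl
  rightUnitor_eq L := by
    change (eval C).map (eqToHom (List.append_nil L)) = _
    simp [tensorUnit_eq, tensorListAppendIso_nil_hom_comp_rightUnitor]

instance : MonoidalCategory (Strictified C) := Monoidal.induced _ inducingFunctorData

instance : (eval C).Monoidal := Monoidal.fromInducedMonoidal _ inducingFunctorData

instance : (eval C).EssSurj where
  mem_essImage X := ⟨[X], ⟨ρ_ X⟩⟩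

instance : (eval C).IsEquivalence where

theorem isStrictMonoidal : IsStrictMonoidal (Strictified C) :=
  ⟨⟨List.append_assoc, fun _ _ _ => rfl⟩, ⟨fun _ => rfl, fun _ => rfl⟩,
    ⟨List.append_nil, fun _ => rfl⟩⟩

end Strictified

noncomputable def MonoidalEquivalenceData.ofIsEquivalence {D : Type u} [Category.{v} D]
    [MonoidalCategory D] (F : D ⥤ C) [F.IsEquivalence] [F.Monoidal] :
    MonoidalEquivalenceData D C :=
  let e := F.asEquivalence
  letI : e.functor.Monoidal := ‹F.Monoidal›
  letI := e.inverseMonoidal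
  -- `inverseMonoidal` is built on `rightAdjointLaxMonoidal`, for which this instance exists.
  haveI : e.IsMonoidal :=
    (inferInstance : letI := e.toAdjunction.rightAdjointLaxMonoidal; e.toAdjunction.IsMonoidal)
  { F := e.functor
    G := e.inverse
    counitIso := e.counitIso
    unitIso := e.unitIso.symm
    counit_monoidal := inferInstanceAs (NatTrans.IsMonoidal e.counit)
    unit_monoidal := inferInstanceAs (NatTrans.IsMonoidal e.unitIso.inv) }

/-- Every monoidal category is monoidally equivalent to a strict monoidal category. -/
theorem exists_strictification
    (C : Type u) [Category.{v} C] [MonoidalCategory C] :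
    ∃ (D : Type u) (catD : Category.{v} D) (monD : MonoidalCategory D),
      IsStrictMonoidal D ∧ Nonempty (MonoidalEquivalenceData D C) :=
  ⟨Strictified C, inferInstance, inferInstance, Strictified.isStrictMonoidal,
    ⟨.ofIsEquivalence (Strictified.eval C)⟩⟩

end Strictification
end
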